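/- Let Ω ⊂ ℝⁿ be a bounded domain satisfying a strong local β-shell condition for some β > 0, with Ahlfors Q-regular boundary K = ∂Ω (0 < Q < n), and suppose m(B(x,r) ∩ Ω) ≃ rⁿ for x ∈ K and 0 < r ≤ 10. For −β < α ≤ 0 define μ_α(A) = ∫_A δ_Ω(y)^α dm(y), where δ_Ω(y) = dist(y, ∂Ω). Then for all x ∈ K and 0 < r ≤ 10, μ_α(B(x,r) ∩ Ω) ≃ r^{n+α}, and hence μ_α(B(x,r) ∩ Ω) ≃ r^{n+α−Q} H^Q(B(x,r) ∩ K), with comparison constants independent of x and r. -/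

import Mathlib

open MeasureTheory Metric Set
open scoped ENNReal

/-!
Split `B(x,r) ∩ Ω` into the dyadic shells on which `δ_Ω ∈ (r/2^(k+1), r/2^k]`. On the `k`-th
shell `δ_Ω^α ≤ (r/2^(k+1))^α`, while the shell condition bounds its measure by
`(2^(-k))^β m(B(x,r) ∩ Ω)`; as `α + β > 0` the resulting series is geometric, so
`μ_α(B(x,r) ∩ Ω) ≲ r^α m(B(x,r) ∩ Ω) ≃ r^(n+α)`, and `δ_Ω ≤ r` on the ball gives the reverse
inequality. Beyond `diam Ω`, where the shell condition says nothing, the ball covers `Ω` up to a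
null sphere. Beyond `diam ∂Ω`, where Ahlfors regularity says nothing, it covers all of `∂Ω`, whose
`H^Q`-measure is finite by compactness; `diam ∂Ω > 0` because a line through a point of `Ω` meets
`∂Ω` on both sides of it. Finally `H^Q(B(x,r) ∩ ∂Ω) ≃ r^Q` turns `r^(n+α)` into
`r^(n+α-Q) H^Q(B(x,r) ∩ ∂Ω)`.
-/

def ComparableToRpow {X : Type*} (f : X → ℝ → ℝ≥0∞) (S : Set X) (s R : ℝ) : Prop :=
  ∃ c C : ℝ, 0 < c ∧ 0 < C ∧ ∀ x ∈ S, ∀ r : ℝ, 0 < r → r ≤ R →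
    ENNReal.ofReal (c * r ^ s) ≤ f x r ∧ f x r ≤ ENNReal.ofReal (C * r ^ s)

lemma Real.rpow_mem_uIcc {d r R : ℝ} (s : ℝ) (hd : 0 < d) (hdr : d ≤ r) (hrR : r ≤ R) :
    r ^ s ∈ uIcc (d ^ s) (R ^ s) := by
  rcases le_total 0 s with hs | hs
  · exact mem_uIcc.2 <| .inl ⟨Real.rpow_le_rpow hd.le hdr hs,
      Real.rpow_le_rpow (hd.trans_le hdr).le hrR hs⟩
  · exact mem_uIcc.2 <| .inr ⟨Real.rpow_le_rpow_of_nonpos (hd.trans_le hdr) hrR hs,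
      Real.rpow_le_rpow_of_nonpos hd hdr hs⟩

namespace ComparableToRpow

variable {X : Type*} {f g : X → ℝ → ℝ≥0∞} {S : Set X} {s d R : ℝ}

lemma of_forall_lt (h : ComparableToRpow f S s d) (hd : 0 < d) {a b : ℝ} (ha : 0 < a)
    (hlarge : ∀ x ∈ S, ∀ r, d < r → r ≤ R →
      ENNReal.ofReal a ≤ f x r ∧ f x r ≤ ENNReal.ofReal b) :
    ComparableToRpow f S s R := by
  obtain ⟨c, C, hc, hC, hsmall⟩ := h
  set R' := max d R
  have hR' : 0 < R' := hd.trans_le (le_max_left d R)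
  have hm : 0 < min (d ^ s) (R' ^ s) := lt_min (by positivity) (by positivity)
  refine ⟨min c (a / max (d ^ s) (R' ^ s)), max C (b / min (d ^ s) (R' ^ s)),
    by positivity, by positivity, fun x hx r hr hrR => ?_⟩
  rcases le_or_gt r d with hrd | hdr
  · obtain ⟨hlo, hup⟩ := hsmall x hx r hr hrd
    exact ⟨le_trans (by gcongr; exact min_le_left _ _) hlo,
      hup.trans (by gcongr; exact le_max_left _ _)⟩
  · obtain ⟨hlo, hup⟩ := hlarge x hx r hdr hrR
    obtain ⟨hmr, hrM⟩ := Real.rpow_mem_uIcc s hd hdr.le (hrR.trans (le_max_right d R))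
    refine ⟨le_trans (ENNReal.ofReal_le_ofReal ?_) hlo, hup.trans (ENNReal.ofReal_le_ofReal ?_)⟩
    · calc min c (a / max (d ^ s) (R' ^ s)) * r ^ s
          ≤ a / max (d ^ s) (R' ^ s) * max (d ^ s) (R' ^ s) := by
            gcongr
            exact min_le_right _ _
        _ = a := div_mul_cancel₀ a (hm.trans_le min_le_max).ne'
    · calc b = b / min (d ^ s) (R' ^ s) * min (d ^ s) (R' ^ s) := (div_mul_cancel₀ b hm.ne').symm
        _ ≤ max C (b / min (d ^ s) (R' ^ s)) * r ^ s := by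
            gcongr
            exact le_max_right _ _

lemma exists_bounds_rpow_and_rpow_sub_mul {a b : ℝ} (hf : ComparableToRpow f S a R)
    (hg : ComparableToRpow g S b R) :
    ∃ c C : ℝ, 0 < c ∧ 0 < C ∧ ∀ x ∈ S, ∀ r : ℝ, 0 < r → r ≤ R →
      (ENNReal.ofReal (c * r ^ a) ≤ f x r ∧ f x r ≤ ENNReal.ofReal (C * r ^ a)) ∧
      (ENNReal.ofReal (c * r ^ (a - b)) * g x r ≤ f x r ∧
        f x r ≤ ENNReal.ofReal (C * r ^ (a - b)) * g x r) := by
  obtain ⟨c₁, C₁, hc₁, hC₁, hf⟩ := hf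
  obtain ⟨c₂, C₂, hc₂, hC₂, hg⟩ := hg
  refine ⟨min c₁ (c₁ / C₂), max C₁ (C₁ / c₂), by positivity, by positivity,
    fun x hx r hr hrR => ?_⟩
  obtain ⟨hf₁, hf₂⟩ := hf x hx r hr hrR
  obtain ⟨hg₁, hg₂⟩ := hg x hx r hr hrR
  have hsplit : r ^ a = r ^ (a - b) * r ^ b := by rw [← Real.rpow_add hr, sub_add_cancel]
  refine ⟨⟨le_trans (by gcongr; exact min_le_left _ _) hf₁,
    hf₂.trans (by gcongr; exact le_max_left _ _)⟩, ?_, ?_⟩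
  · calc ENNReal.ofReal (min c₁ (c₁ / C₂) * r ^ (a - b)) * g x r
        ≤ ENNReal.ofReal (c₁ / C₂ * r ^ (a - b)) * ENNReal.ofReal (C₂ * r ^ b) := by
          gcongr
          exact min_le_right _ _
      _ = ENNReal.ofReal (c₁ * r ^ a) := by
          rw [← ENNReal.ofReal_mul (by positivity), hsplit]
          field_simp
      _ ≤ f x r := hf₁
  · calc f x r ≤ ENNReal.ofReal (C₁ * r ^ a) := hf₂
      _ = ENNReal.ofReal (C₁ / c₂ * r ^ (a - b)) * ENNReal.ofReal (c₂ * r ^ b) := by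
          rw [← ENNReal.ofReal_mul (by positivity), hsplit]
          field_simp
      _ ≤ ENNReal.ofReal (max C₁ (C₁ / c₂) * r ^ (a - b)) * g x r := by
          gcongr
          exact le_max_right _ _

lemma measure_ball_inter_of_isCompact [PseudoMetricSpace X] [MeasurableSpace X] {ν : Measure X}
    {K : Set X} (hK : IsCompact K) (hdK : 0 < diam K)
    (h : ComparableToRpow (fun x r => ν (ball x r ∩ K)) K s (diam K)) (R : ℝ) :
    ComparableToRpow (fun x r => ν (ball x r ∩ K)) K s R := by
  obtain ⟨c, C, hc, hC, hbounds⟩ := h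
  have hfin : ν K ≠ ∞ := (hK.measure_lt_top_of_nhdsWithin fun x hx =>
    ⟨K ∩ ball x (diam K), inter_mem_nhdsWithin K (ball_mem_nhds x hdK), by
      rw [inter_comm]; exact (hbounds x hx _ hdK le_rfl).2.trans_lt ENNReal.ofReal_lt_top⟩).ne
  refine of_forall_lt ⟨c, C, hc, hC, hbounds⟩ hdK (a := c * diam K ^ s) (b := (ν K).toReal)
    (by positivity) fun x hx r hdr _ => ?_
  have hball : ball x r ∩ K = K :=
    inter_eq_right.2 fun y hy => mem_ball.2 ((dist_le_diam_of_mem hK.isBounded hy hx).trans_lt hdr)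
  simp only [hball, ENNReal.ofReal_toReal hfin, le_rfl, and_true]
  exact (hbounds x hx _ hdK le_rfl).1.trans (measure_mono inter_subset_right)

end ComparableToRpow

lemma IsPreconnected.inter_frontier_nonempty {X : Type*} [TopologicalSpace X] {s t : Set X}
    (hs : IsPreconnected s) (hst : (s ∩ t).Nonempty) (hst' : (s \ t).Nonempty) :
    (s ∩ frontier t).Nonempty := by
  by_contra! h
  have hcover : s ⊆ interior t ∪ (closure t)ᶜ := fun y hy => by
    by_contra hy'
    simp only [mem_union, mem_compl_iff, not_or, not_not] at hy'
    exact (eq_empty_iff_forall_notMem.1 h) y ⟨hy, hy'.2, hy'.1⟩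
  rcases hs.subset_or_subset isOpen_interior isClosed_closure.isOpen_compl
      (disjoint_compl_right.mono_left interior_subset_closure) hcover with hsub | hsub
  · obtain ⟨y, hys, hyt⟩ := hst'
    exact hyt (interior_subset (hsub hys))
  · obtain ⟨y, hys, hyt⟩ := hst
    exact hsub hys (subset_closure hyt)

section Frontier

variable {E : Type*} [NormedAddCommGroup E] [NormedSpace ℝ E]

lemma exists_pos_add_smul_mem_frontier {Ω : Set E} (hopen : IsOpen Ω)
    (hbdd : Bornology.IsBounded Ω) {z : E} (hz : z ∈ Ω) {e : E} (he : e ≠ 0) :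
    ∃ t : ℝ, 0 < t ∧ z + t • e ∈ frontier Ω := by
  obtain ⟨R, hR⟩ := hbdd.subset_closedBall z
  set M := (|R| + 1) / ‖e‖
  have hM : 0 ≤ M := by positivity
  have hout : z + M • e ∉ Ω := fun h => by
    have := mem_closedBall.1 (hR h)
    rw [dist_eq_norm, add_sub_cancel_left, norm_smul, Real.norm_of_nonneg hM,
      div_mul_cancel₀ _ (norm_ne_zero_iff.2 he)] at this
    linarith [le_abs_self R]
  have hray : IsPreconnected ((fun t : ℝ => z + t • e) '' Icc 0 M) :=
    isPreconnected_Icc.image _ (by fun_prop)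
  obtain ⟨_, ⟨t, ht, rfl⟩, hfr⟩ := hray.inter_frontier_nonempty
    ⟨z, ⟨0, left_mem_Icc.2 hM, by simp⟩, hz⟩ ⟨_, ⟨M, right_mem_Icc.2 hM, rfl⟩, hout⟩
  refine ⟨t, ht.1.lt_of_ne fun h0 => ?_, hfr⟩
  subst h0
  simp only [zero_smul, add_zero] at hfr
  exact hopen.inter_frontier_eq.subset ⟨hz, hfr⟩

lemma Bornology.IsBounded.diam_frontier_pos [Nontrivial E] {Ω : Set E}
    (hbdd : Bornology.IsBounded Ω) (hopen : IsOpen Ω) (hne : Ω.Nonempty) :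
    0 < diam (frontier Ω) := by
  obtain ⟨z, hz⟩ := hne
  obtain ⟨e, he⟩ := exists_ne (0 : E)
  obtain ⟨t, ht, hp⟩ := exists_pos_add_smul_mem_frontier hopen hbdd hz he
  obtain ⟨t', ht', hq⟩ := exists_pos_add_smul_mem_frontier hopen hbdd hz (neg_ne_zero.2 he)
  have hdist : dist (z + t • e) (z + t' • -e) = (t + t') * ‖e‖ := by
    rw [dist_eq_norm, smul_neg, add_sub_add_left_eq_sub, sub_neg_eq_add, ← add_smul, norm_smul,
      Real.norm_of_nonneg (by positivity)]
  calc 0 < dist (z + t • e) (z + t' • -e) := by rw [hdist]; have := norm_pos_iff.2 he; positivity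
    _ ≤ diam (frontier Ω) := dist_le_diam_of_mem (hbdd.closure.subset frontier_subset_closure) hp hq

end Frontier

lemma exists_nat_mem_Ioc_div_two_pow {t r : ℝ} (ht : 0 < t) (htr : t ≤ r) :
    ∃ k : ℕ, t ∈ Ioc (r / 2 ^ (k + 1)) (r / 2 ^ k) := by
  obtain ⟨k, hk, hk'⟩ := exists_nat_pow_near ((one_le_div ht).2 htr) one_lt_two
  refine ⟨k, (div_lt_iff₀ (by positivity)).2 ?_, (le_div_iff₀ (by positivity)).2 ?_⟩
  · rwa [div_lt_iff₀ ht, mul_comm] at hk'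
  · rwa [le_div_iff₀ ht, mul_comm] at hk

lemma rpow_div_two_pow_mul_rpow_eq (α β : ℝ) {r : ℝ} (hr : 0 < r) (k : ℕ) :
    (r / 2 ^ (k + 1)) ^ α * (r / 2 ^ k / r) ^ β =
      2 ^ (-α) * r ^ α * ((2 : ℝ) ^ (-(α + β))) ^ k := by
  rw [div_div_cancel_left' hr.ne', Real.div_rpow hr.le (by positivity),
    Real.inv_rpow (by positivity), ← Real.rpow_mul_natCast zero_le_two, ← Real.rpow_natCast,
    ← Real.rpow_natCast, ← Real.rpow_mul zero_le_two, ← Real.rpow_mul zero_le_two,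
    div_eq_mul_inv, ← Real.rpow_neg zero_le_two, ← Real.rpow_neg zero_le_two, mul_right_comm,
    mul_assoc, ← Real.rpow_add two_pos, mul_comm (2 ^ (-α)), mul_assoc, ← Real.rpow_add two_pos]
  push_cast
  ring_nf

theorem setLIntegral_rpow_le_of_measure_le {X : Type*} [MeasurableSpace X] {μ : Measure X}
    {B : Set X} {δ : X → ℝ} (hB : MeasurableSet B) (hδ : Measurable δ) {α β Cs r : ℝ}
    (hα : α ≤ 0) (hαβ : 0 < α + β) (hCs : 0 ≤ Cs) (hr : 0 < r)
    (hpos : ∀ y ∈ B, 0 < δ y) (hle : ∀ y ∈ B, δ y ≤ r)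
    (hshell : ∀ ρ, 0 < ρ → ρ ≤ r →
      μ (B ∩ {y | δ y ≤ ρ}) ≤ ENNReal.ofReal (Cs * (ρ / r) ^ β) * μ B) :
    ∫⁻ y in B, ENNReal.ofReal (δ y ^ α) ∂μ ≤
      ENNReal.ofReal (Cs * 2 ^ (-α) * r ^ α * (1 - 2 ^ (-(α + β)))⁻¹) * μ B := by
  set q : ℝ := 2 ^ (-(α + β))
  have hq0 : 0 ≤ q := by positivity
  have hq1 : q < 1 := Real.rpow_lt_one_of_one_lt_of_neg one_lt_two (by linarith)
  set c : ℝ := Cs * 2 ^ (-α) * r ^ α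
  set S : ℕ → Set X := fun k => B ∩ δ ⁻¹' Ioc (r / 2 ^ (k + 1)) (r / 2 ^ k)
  have hcover : B ⊆ ⋃ k, S k := fun y hy =>
    mem_iUnion.2 <| (exists_nat_mem_Ioc_div_two_pow (hpos y hy) (hle y hy)).imp fun _ hk => ⟨hy, hk⟩
  have hpiece : ∀ k, ∫⁻ y in S k, ENNReal.ofReal (δ y ^ α) ∂μ ≤
      ENNReal.ofReal (c * q ^ k) * μ B := by
    intro k
    calc ∫⁻ y in S k, ENNReal.ofReal (δ y ^ α) ∂μ
          ≤ ∫⁻ _ in S k, ENNReal.ofReal ((r / 2 ^ (k + 1)) ^ α) ∂μ :=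
            setLIntegral_mono' (hB.inter (hδ measurableSet_Ioc)) fun y hy =>
              ENNReal.ofReal_le_ofReal (Real.rpow_le_rpow_of_nonpos (by positivity) hy.2.1.le hα)
        _ = ENNReal.ofReal ((r / 2 ^ (k + 1)) ^ α) * μ (S k) := setLIntegral_const _ _
        _ ≤ ENNReal.ofReal ((r / 2 ^ (k + 1)) ^ α) *
            (ENNReal.ofReal (Cs * (r / 2 ^ k / r) ^ β) * μ B) := by
            gcongr
            refine (measure_mono ?_).trans
              (hshell _ (by positivity) (div_le_self hr.le (one_le_pow₀ one_le_two)))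
            exact fun y hy => ⟨hy.1, hy.2.2⟩
        _ = ENNReal.ofReal (c * q ^ k) * μ B := by
            rw [← mul_assoc, ← ENNReal.ofReal_mul (by positivity), mul_left_comm,
              rpow_div_two_pow_mul_rpow_eq α β hr k, ← mul_assoc, ← mul_assoc]
  have hsum : ∑' k : ℕ, ENNReal.ofReal (c * q ^ k) = ENNReal.ofReal (c * (1 - q)⁻¹) := by
    rw [← ENNReal.ofReal_tsum_of_nonneg (fun k => by positivity)
      ((summable_geometric_of_lt_one hq0 hq1).mul_left c), tsum_mul_left,
      tsum_geometric_of_lt_one hq0 hq1]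
  calc ∫⁻ y in B, ENNReal.ofReal (δ y ^ α) ∂μ
      ≤ ∫⁻ y in ⋃ k, S k, ENNReal.ofReal (δ y ^ α) ∂μ := lintegral_mono_set hcover
    _ ≤ ∑' k, ∫⁻ y in S k, ENNReal.ofReal (δ y ^ α) ∂μ := lintegral_iUnion_le _ _
    _ ≤ ∑' k : ℕ, ENNReal.ofReal (c * q ^ k) * μ B := ENNReal.tsum_le_tsum hpiece
    _ = _ := by rw [ENNReal.tsum_mul_right, hsum]

lemma le_setLIntegral_rpow {X : Type*} [MeasurableSpace X] {μ : Measure X} {B : Set X}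
    {δ : X → ℝ} (hB : MeasurableSet B) {α r : ℝ} (hα : α ≤ 0) (hpos : ∀ y ∈ B, 0 < δ y)
    (hle : ∀ y ∈ B, δ y ≤ r) :
    ENNReal.ofReal (r ^ α) * μ B ≤ ∫⁻ y in B, ENNReal.ofReal (δ y ^ α) ∂μ := by
  rw [← setLIntegral_const]
  exact setLIntegral_mono' hB fun y hy =>
    ENNReal.ofReal_le_ofReal (Real.rpow_le_rpow_of_nonpos (hpos y hy) (hle y hy) hα)

lemma IsOpen.infDist_frontier_pos {X : Type*} [PseudoMetricSpace X] {Ω : Set X}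
    (hopen : IsOpen Ω) (hK : (frontier Ω).Nonempty) {y : X} (hy : y ∈ Ω) :
    0 < infDist y (frontier Ω) :=
  (isClosed_frontier.notMem_iff_infDist_pos hK).1 fun hy' =>
    hopen.inter_frontier_eq.subset ⟨hy, hy'⟩

theorem comparableToRpow_setLIntegral_infDist_rpow_min_diam {X : Type*} [PseudoMetricSpace X]
    [MeasurableSpace X] [OpensMeasurableSpace X] (μ : Measure X) {Ω : Set X} (hopen : IsOpen Ω)
    {s α β Cs R : ℝ} (hα : α ≤ 0) (hαβ : 0 < α + β) (hCs : 0 < Cs)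
    (hshell : ∀ x ∈ frontier Ω, ∀ ρ r : ℝ, 0 < ρ → ρ ≤ r → r ≤ diam Ω →
      μ (ball x r ∩ Ω ∩ {y | infDist y (frontier Ω) ≤ ρ}) ≤
        ENNReal.ofReal (Cs * (ρ / r) ^ β) * μ (ball x r ∩ Ω))
    (hvol : ComparableToRpow (fun x r => μ (ball x r ∩ Ω)) (frontier Ω) s R) :
    ComparableToRpow
      (fun x r => ∫⁻ y in ball x r ∩ Ω, ENNReal.ofReal (infDist y (frontier Ω) ^ α) ∂μ)
      (frontier Ω) (s + α) (min (diam Ω) R) := by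
  obtain ⟨c, C, hc, hC, hvol⟩ := hvol
  have hq : 0 < 1 - (2 : ℝ) ^ (-(α + β)) :=
    sub_pos.2 (Real.rpow_lt_one_of_one_lt_of_neg one_lt_two (by linarith))
  set C' := Cs * 2 ^ (-α) * (1 - 2 ^ (-(α + β)))⁻¹ * C with hC'
  refine ⟨c, C', hc, by positivity, fun x hx r hr hrdR => ?_⟩
  obtain ⟨hvol₁, hvol₂⟩ := hvol x hx r hr (hrdR.trans (min_le_right _ _))
  have hmeas : MeasurableSet (ball x r ∩ Ω) := measurableSet_ball.inter hopen.measurableSet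
  have hpos : ∀ y ∈ ball x r ∩ Ω, 0 < infDist y (frontier Ω) := fun y hy =>
    hopen.infDist_frontier_pos ⟨x, hx⟩ hy.2
  have hle : ∀ y ∈ ball x r ∩ Ω, infDist y (frontier Ω) ≤ r := fun y hy =>
    (infDist_le_dist_of_mem hx).trans (mem_ball.1 hy.1).le
  constructor
  · calc ENNReal.ofReal (c * r ^ (s + α))
        = ENNReal.ofReal (r ^ α) * ENNReal.ofReal (c * r ^ s) := by
          rw [← ENNReal.ofReal_mul (by positivity), Real.rpow_add hr]
          ring_nf
      _ ≤ ENNReal.ofReal (r ^ α) * μ (ball x r ∩ Ω) := by gcongr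
      _ ≤ _ := le_setLIntegral_rpow hmeas hα hpos hle
  · calc ∫⁻ y in ball x r ∩ Ω, ENNReal.ofReal (infDist y (frontier Ω) ^ α) ∂μ
        ≤ ENNReal.ofReal (Cs * 2 ^ (-α) * r ^ α * (1 - 2 ^ (-(α + β)))⁻¹) *
            μ (ball x r ∩ Ω) :=
          setLIntegral_rpow_le_of_measure_le hmeas (continuous_infDist_pt _).measurable
            hα hαβ hCs.le hr hpos hle fun ρ hρ hρr =>
              hshell x hx ρ r hρ hρr (hrdR.trans (min_le_left _ _))
      _ ≤ ENNReal.ofReal (Cs * 2 ^ (-α) * r ^ α * (1 - 2 ^ (-(α + β)))⁻¹) *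
            ENNReal.ofReal (C * r ^ s) := by gcongr
      _ = ENNReal.ofReal (C' * r ^ (s + α)) := by
          rw [← ENNReal.ofReal_mul (by positivity), Real.rpow_add hr, hC']
          ring_nf

section AddHaar

variable {E : Type*} [NormedAddCommGroup E] [NormedSpace ℝ E] [MeasurableSpace E] [BorelSpace E]
  [FiniteDimensional ℝ E] (μ : Measure E) [μ.IsAddHaarMeasure] {Ω : Set E}

lemma setLIntegral_ball_inter_eq_of_diam_lt (hbdd : Bornology.IsBounded Ω) (hd : 0 < diam Ω)
    {x : E} (hx : x ∈ closure Ω) {r : ℝ} (hr : diam Ω < r) (f : E → ℝ≥0∞) :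
    ∫⁻ y in ball x r ∩ Ω, f y ∂μ = ∫⁻ y in ball x (diam Ω) ∩ Ω, f y ∂μ := by
  refine le_antisymm (lintegral_mono_set' (ae_le_set.2 (measure_mono_null ?_
    (Measure.addHaar_sphere_of_ne_zero μ x hd.ne'))))
    (lintegral_mono_set (inter_subset_inter_left _ (ball_subset_ball hr.le)))
  rintro y ⟨⟨-, hyΩ⟩, hy⟩
  have hyx : dist y x ≤ diam Ω := by
    simpa only [diam_closure] using dist_le_diam_of_mem hbdd.closure (subset_closure hyΩ) hx
  exact mem_sphere.2 (hyx.eq_of_not_lt fun h => hy ⟨mem_ball.2 h, hyΩ⟩)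

theorem comparableToRpow_setLIntegral_infDist_rpow (hopen : IsOpen Ω)
    (hbdd : Bornology.IsBounded Ω) (hd : 0 < diam Ω) {s α β Cs R : ℝ} (hα : α ≤ 0)
    (hαβ : 0 < α + β) (hCs : 0 < Cs) (hR : 0 < R)
    (hshell : ∀ x ∈ frontier Ω, ∀ ρ r : ℝ, 0 < ρ → ρ ≤ r → r ≤ diam Ω →
      μ (ball x r ∩ Ω ∩ {y | infDist y (frontier Ω) ≤ ρ}) ≤
        ENNReal.ofReal (Cs * (ρ / r) ^ β) * μ (ball x r ∩ Ω))
    (hvol : ComparableToRpow (fun x r => μ (ball x r ∩ Ω)) (frontier Ω) s R) :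
    ComparableToRpow
      (fun x r => ∫⁻ y in ball x r ∩ Ω, ENNReal.ofReal (infDist y (frontier Ω) ^ α) ∂μ)
      (frontier Ω) (s + α) R := by
  obtain ⟨c, C, hc, hC, hsmall⟩ :=
    comparableToRpow_setLIntegral_infDist_rpow_min_diam μ hopen hα hαβ hCs hshell hvol
  refine ComparableToRpow.of_forall_lt ⟨c, C, hc, hC, hsmall⟩ (lt_min hd hR)
    (a := c * diam Ω ^ (s + α)) (b := C * diam Ω ^ (s + α)) (by positivity)
    fun x hx r hr hrR => ?_
  have hdr : diam Ω < r := lt_of_not_ge fun h => hr.not_ge (le_min h hrR)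
  rw [setLIntegral_ball_inter_eq_of_diam_lt μ hbdd hd (frontier_subset_closure hx) hdr]
  exact hsmall x hx _ hd (le_min le_rfl (hdr.le.trans hrR))

end AddHaar

theorem stmt9_general (n : ℕ) (Q α β : ℝ) (hα0 : α ≤ 0) (hαβ : -β < α)
    (Ω : Set (EuclideanSpace ℝ (Fin n))) (hopen : IsOpen Ω)
    (hbdd : Bornology.IsBounded Ω)
    (Cs CA Cm : ℝ) (hCs : 1 ≤ Cs) (hCA : 1 ≤ CA) (hCm : 1 ≤ Cm)
    -- strong local β-shell condition, upper bound for all x ∈ closure Ω: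
    (hshellU : ∀ x ∈ closure Ω, ∀ ρ r : ℝ, 0 < ρ → ρ ≤ r → r ≤ diam Ω →
      volume {y | y ∈ ball x r ∩ Ω ∧ infDist y (frontier Ω) ≤ ρ} ≤
        ENNReal.ofReal (Cs * (ρ / r) ^ β) * volume (ball x r ∩ Ω))
    -- Ahlfors Q-regularity of K = ∂Ω:
    (hAhlfors : ∀ x ∈ frontier Ω, ∀ r : ℝ, 0 < r → r ≤ diam (frontier Ω) →
      ENNReal.ofReal (CA⁻¹ * r ^ Q) ≤ μH[Q] (ball x r ∩ frontier Ω) ∧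
      μH[Q] (ball x r ∩ frontier Ω) ≤ ENNReal.ofReal (CA * r ^ Q))
    -- volume of balls centered at the boundary:
    (hvol : ∀ x ∈ frontier Ω, ∀ r : ℝ, 0 < r → r ≤ 10 →
      ENNReal.ofReal (Cm⁻¹ * r ^ (n : ℝ)) ≤ volume (ball x r ∩ Ω) ∧
      volume (ball x r ∩ Ω) ≤ ENNReal.ofReal (Cm * r ^ (n : ℝ))) :
    ∃ c C : ℝ, 0 < c ∧ 0 < C ∧ ∀ x ∈ frontier Ω, ∀ r : ℝ, 0 < r → r ≤ 10 →
      (ENNReal.ofReal (c * r ^ ((n : ℝ) + α)) ≤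
          (∫⁻ y in ball x r ∩ Ω, ENNReal.ofReal (infDist y (frontier Ω) ^ α)) ∧
        (∫⁻ y in ball x r ∩ Ω, ENNReal.ofReal (infDist y (frontier Ω) ^ α)) ≤
          ENNReal.ofReal (C * r ^ ((n : ℝ) + α))) ∧
      (ENNReal.ofReal (c * r ^ ((n : ℝ) + α - Q)) * μH[Q] (ball x r ∩ frontier Ω) ≤
          (∫⁻ y in ball x r ∩ Ω, ENNReal.ofReal (infDist y (frontier Ω) ^ α)) ∧
        (∫⁻ y in ball x r ∩ Ω, ENNReal.ofReal (infDist y (frontier Ω) ^ α)) ≤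
          ENNReal.ofReal (C * r ^ ((n : ℝ) + α - Q)) * μH[Q] (ball x r ∩ frontier Ω)) := by
  rcases (frontier Ω).eq_empty_or_nonempty with hK | ⟨x₀, hx₀⟩
  · exact ⟨1, 1, one_pos, one_pos, by simp [hK]⟩
  obtain ⟨z, hz⟩ : Ω.Nonempty := closure_nonempty_iff.1 ⟨x₀, frontier_subset_closure hx₀⟩
  have : Nontrivial (EuclideanSpace ℝ (Fin n)) :=
    ⟨z, x₀, fun h => hopen.inter_frontier_eq.subset ⟨hz, h ▸ hx₀⟩⟩
  have hdK : 0 < diam (frontier Ω) := hbdd.diam_frontier_pos hopen ⟨z, hz⟩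
  have hd : 0 < diam Ω := hdK.trans_le <| by
    simpa only [diam_closure] using diam_mono frontier_subset_closure hbdd.closure
  have hH := ComparableToRpow.measure_ball_inter_of_isCompact
    (hbdd.isCompact_closure.of_isClosed_subset isClosed_frontier frontier_subset_closure) hdK
    ⟨CA⁻¹, CA, by positivity, by positivity, hAhlfors⟩ 10
  have hμ := comparableToRpow_setLIntegral_infDist_rpow volume hopen hbdd hd hα0 (by linarith)
    (by linarith) (by norm_num) (fun x hx => hshellU x (frontier_subset_closure hx))
    ⟨Cm⁻¹, Cm, by positivity, by positivity, hvol⟩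
  exact hμ.exists_bounds_rpow_and_rpow_sub_mul hH

/-- Codimension lemma (Lemma 4.3): for a bounded domain `Ω ⊂ ℝⁿ` satisfying a strong
local `β`-shell condition, with Ahlfors `Q`-regular boundary `K = ∂Ω` and
`m(B(x,r) ∩ Ω) ≃ rⁿ` for `x ∈ K`, the weighted measure `μ_α(A) = ∫_A δ_Ω^α dm`
satisfies `μ_α(B(x,r) ∩ Ω) ≃ r^{n+α} ≃ r^{n+α-Q} H^Q(B(x,r) ∩ K)`. -/
theorem stmt9 (n : ℕ) (Q α β : ℝ) (hQ0 : 0 < Q) (hQn : Q < n) (hβ : 0 < β)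
    (hα0 : α ≤ 0) (hαβ : -β < α)
    (Ω : Set (EuclideanSpace ℝ (Fin n))) (hopen : IsOpen Ω) (hconn : IsConnected Ω)
    (hbdd : Bornology.IsBounded Ω)
    (Cs CA Cm : ℝ) (hCs : 1 ≤ Cs) (hCA : 1 ≤ CA) (hCm : 1 ≤ Cm)
    -- strong local β-shell condition, upper bound for all x ∈ closure Ω:
    (hshellU : ∀ x ∈ closure Ω, ∀ ρ r : ℝ, 0 < ρ → ρ ≤ r → r ≤ diam Ω →
      volume {y | y ∈ ball x r ∩ Ω ∧ infDist y (frontier Ω) ≤ ρ} ≤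
        ENNReal.ofReal (Cs * (ρ / r) ^ β) * volume (ball x r ∩ Ω))
    -- strong local β-shell condition, lower bound for x ∈ ∂Ω:
    (hshellL : ∀ x ∈ frontier Ω, ∀ ρ r : ℝ, 0 < ρ → ρ ≤ r → r ≤ diam Ω →
      ENNReal.ofReal (Cs⁻¹ * (ρ / r) ^ β) * volume (ball x r ∩ Ω) ≤
        volume {y | y ∈ ball x r ∩ Ω ∧ infDist y (frontier Ω) ≤ ρ})
    -- Ahlfors Q-regularity of K = ∂Ω:
    (hAhlfors : ∀ x ∈ frontier Ω, ∀ r : ℝ, 0 < r → r ≤ diam (frontier Ω) →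
      ENNReal.ofReal (CA⁻¹ * r ^ Q) ≤ μH[Q] (ball x r ∩ frontier Ω) ∧
      μH[Q] (ball x r ∩ frontier Ω) ≤ ENNReal.ofReal (CA * r ^ Q))
    -- volume of balls centered at the boundary:
    (hvol : ∀ x ∈ frontier Ω, ∀ r : ℝ, 0 < r → r ≤ 10 →
      ENNReal.ofReal (Cm⁻¹ * r ^ (n : ℝ)) ≤ volume (ball x r ∩ Ω) ∧
      volume (ball x r ∩ Ω) ≤ ENNReal.ofReal (Cm * r ^ (n : ℝ))) :
    ∃ c C : ℝ, 0 < c ∧ 0 < C ∧ ∀ x ∈ frontier Ω, ∀ r : ℝ, 0 < r → r ≤ 10 →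
      (ENNReal.ofReal (c * r ^ ((n : ℝ) + α)) ≤
          (∫⁻ y in ball x r ∩ Ω, ENNReal.ofReal (infDist y (frontier Ω) ^ α)) ∧
        (∫⁻ y in ball x r ∩ Ω, ENNReal.ofReal (infDist y (frontier Ω) ^ α)) ≤
          ENNReal.ofReal (C * r ^ ((n : ℝ) + α))) ∧
      (ENNReal.ofReal (c * r ^ ((n : ℝ) + α - Q)) * μH[Q] (ball x r ∩ frontier Ω) ≤
          (∫⁻ y in ball x r ∩ Ω, ENNReal.ofReal (infDist y (frontier Ω) ^ α)) ∧
        (∫⁻ y in ball x r ∩ Ω, ENNReal.ofReal (infDist y (frontier Ω) ^ α)) ≤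
          ENNReal.ofReal (C * r ^ ((n : ℝ) + α - Q)) * μH[Q] (ball x r ∩ frontier Ω)) :=
  stmt9_general n Q α β hα0 hαβ Ω hopen hbdd Cs CA Cm hCs hCA hCm hshellU hAhlfors hvol
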